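/- Let B ∈ ℝ^{n×n}_{≥0} be non-negative with per(B) > 0, and let B* be its permanental inverse. Then for any index sets S, T ⊆ {1,...,n} with |S| = |T|, per(B(−S,−T))/per(B) ≤ per(B*(T,S)), where B(−S,−T) is B with rows in S and columns in T deleted, and B*(T,S) is the submatrix of B* with rows indexed by T and columns indexed by S. -/

import Mathlib

open Matrix BigOperators

/-- The permanent of a square matrix. -/
noncomputable def per {α : Type*} [DecidableEq α] [Fintype α] (A : Matrix α α ℝ) : ℝ :=
  ∑ σ : Equiv.Perm α, ∏ i, A i (σ i)

/-- The permanent of a (possibly rectangular) matrix whose index types are in bijection,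
defined as a sum over bijections.  For equal index types this agrees with the usual
permanent, and it is `1` for the empty matrix. -/
noncomputable def perR {α β : Type*} [Fintype α] [Fintype β] [DecidableEq α] [DecidableEq β]
    (A : Matrix α β ℝ) : ℝ :=
  ∑ f : α ≃ β, ∏ i, A i (f i)

/-- The permanental inverse. -/
noncomputable def pinv {d : ℕ} (B : Matrix (Fin (d + 1)) (Fin (d + 1)) ℝ) :
    Matrix (Fin (d + 1)) (Fin (d + 1)) ℝ :=
  Matrix.of fun i j => per (B.submatrix (Fin.succAbove j) (Fin.succAbove i)) / per B

/-!
Write `per(U, V)` for the permanent of the submatrix with rows `U` and columns `V`. Up to the factor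
`per B ^ |T|`, `per (B*(T, S))` is a permanent of the permanental adjugate, so Laplace expansion
along a row `t ∈ T` and induction on `|S| = |T|` reduce the theorem to the one-step inequality

  `per A * per(Sᶜ, Tᶜ) ≤ ∑ s ∈ S, per({s}ᶜ, {t}ᶜ) * per((S \ {s})ᶜ, (T \ {t})ᶜ)`.

Multiplied by `|S|!`, both sides become sums over permutations of products of entries: over pairs
`(σ, π)` with `π(S) = T` on the left, over `(u, s, μ, ν)` with `μ s = t` and `ν(S \ {s}) = T \ {t}`
on the right. As the entries are nonnegative, a weight-preserving injection from left to right
terms suffices. Follow the alternating walk `x₀ = σ⁻¹ t`, `x_{j+1} = σ⁻¹ (π x_j)` up to its first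
visit `s` of `S` (it does reach `π⁻¹ t ∈ S`), let `μ` and `ν` trade the columns of `σ` and `π` along
it and close the cycle through `t`. The exchanged pair `(ν, μ)` runs along the same walk, which
recovers `(σ, π)` from `(π⁻¹ t, s, μ, ν)`.
-/

open Finset

theorem Finset.sum_le_sum_of_injOn {ι κ M : Type*} [AddCommMonoid M] [Preorder M] [AddLeftMono M]
    {s : Finset ι} {t : Finset κ} {f : ι → M} {g : κ → M} (e : ι → κ) (he : Set.InjOn e s)
    (hest : ∀ i ∈ s, e i ∈ t) (hfg : ∀ i ∈ s, f i = g (e i)) (hg : ∀ j ∈ t, 0 ≤ g j) :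
    ∑ i ∈ s, f i ≤ ∑ j ∈ t, g j := by
  classical
  calc ∑ i ∈ s, f i = ∑ j ∈ s.image e, g j := by rw [sum_image he]; exact sum_congr rfl hfg
    _ ≤ ∑ j ∈ t, g j :=
      sum_le_sum_of_subset_of_nonneg (image_subset_iff.2 hest) fun j hj _ => hg j hj

def Equiv.subtypeApplyEqEquiv {α β : Type*} [DecidableEq α] [DecidableEq β] (a : α) (b : β) :
    {f : α ≃ β // f a = b} ≃ ({x // x ≠ a} ≃ {y // y ≠ b}) :=
  ((Equiv.equivCongr (Equiv.optionSubtypeNe a).symm (Equiv.refl β)).subtypeEquiv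
    fun _ => Iff.rfl).trans (Equiv.optionSubtype b)

section Permanent

variable {α β α' β' : Type*} [Fintype α] [Fintype β] [Fintype α'] [Fintype β']
  [DecidableEq α] [DecidableEq β] [DecidableEq α'] [DecidableEq β']

theorem perR_nonneg {A : Matrix α β ℝ} (hA : ∀ i j, 0 ≤ A i j) : 0 ≤ perR A :=
  sum_nonneg fun f _ => prod_nonneg fun i _ => hA i (f i)

theorem per_nonneg {A : Matrix α α ℝ} (hA : ∀ i j, 0 ≤ A i j) : 0 ≤ per A :=
  perR_nonneg hA

theorem perR_submatrix_equiv (A : Matrix α β ℝ) (e : α' ≃ α) (f : β' ≃ β) :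
    perR (A.submatrix e f) = perR A :=
  Fintype.sum_equiv (e.equivCongr f) _ _ fun g =>
    Fintype.prod_equiv e _ _ fun i => by simp

theorem perR_smul (c : ℝ) (A : Matrix α β ℝ) :
    perR (c • A) = c ^ Fintype.card α * perR A := by
  simp only [perR, Matrix.smul_apply, smul_eq_mul, prod_mul_distrib, prod_const, card_univ,
    mul_sum]

theorem perR_eq_sum_mul_perR (A : Matrix α β ℝ) (a : α) :
    perR A = ∑ b, A a b *
      perR (A.submatrix ((↑) : {x // x ≠ a} → α) ((↑) : {y // y ≠ b} → β)) := by
  rw [perR, ← Fintype.sum_fiberwise (fun f : α ≃ β => f a)]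
  refine Fintype.sum_congr _ _ fun b => ?_
  rw [perR, mul_sum, ← (Equiv.subtypeApplyEqEquiv a b).sum_comp]
  refine Fintype.sum_congr _ _ fun f => ?_
  rw [Fintype.prod_eq_mul_prod_subtype_ne _ a, f.2]
  rfl

end Permanent

section Minors

variable {ι : Type*} [DecidableEq ι]

noncomputable def subPer (A : Matrix ι ι ℝ) (U V : Finset ι) : ℝ :=
  perR (A.submatrix ((↑) : U → ι) ((↑) : V → ι))

noncomputable def perAdj [Fintype ι] (A : Matrix ι ι ℝ) : Matrix ι ι ℝ :=
  Matrix.of fun i j => subPer A {j}ᶜ {i}ᶜ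

theorem subPer_nonneg {A : Matrix ι ι ℝ} (hA : ∀ i j, 0 ≤ A i j) (U V : Finset ι) :
    0 ≤ subPer A U V :=
  perR_nonneg fun _ _ => hA _ _

theorem subPer_univ [Fintype ι] (A : Matrix ι ι ℝ) : subPer A univ univ = per A :=
  perR_submatrix_equiv A (Equiv.subtypeUnivEquiv mem_univ) (Equiv.subtypeUnivEquiv mem_univ)

theorem subPer_empty (A : Matrix ι ι ℝ) : subPer A ∅ ∅ = 1 := by
  simp [subPer, perR]

def eraseEquivSubtypeNe (T : Finset ι) {t : ι} (ht : t ∈ T) :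
    ↥(T.erase t) ≃ {x : ↥T // x ≠ ⟨t, ht⟩} where
  toFun x := ⟨⟨x, mem_of_mem_erase x.2⟩, fun h => ne_of_mem_erase x.2 (congrArg Subtype.val h)⟩
  invFun x := ⟨x.1, mem_erase.2 ⟨fun h => x.2 (Subtype.ext h), x.1.2⟩⟩
  left_inv _ := rfl
  right_inv _ := rfl

theorem subPer_eq_sum_mul_subPer_erase (A : Matrix ι ι ℝ) {T : Finset ι} {t : ι} (ht : t ∈ T)
    (S : Finset ι) :
    subPer A T S = ∑ s ∈ S, A t s * subPer A (T.erase t) (S.erase s) := by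
  rw [subPer, perR_eq_sum_mul_perR _ ⟨t, ht⟩, ← sum_coe_sort S]
  refine Fintype.sum_congr _ _ fun s => ?_
  rw [subPer, ← perR_submatrix_equiv _ (eraseEquivSubtypeNe T ht) (eraseEquivSubtypeNe S s.2)]
  rfl

theorem subPer_smul (c : ℝ) (A : Matrix ι ι ℝ) (U V : Finset ι) :
    subPer (c • A) U V = c ^ #U * subPer A U V := by
  rw [subPer, subPer, ← Fintype.card_coe U, ← perR_smul]
  rfl

end Minors

section PermSums

open Equiv

variable {ι : Type*} [DecidableEq ι]

def permSplitEquiv (U V : Finset ι) :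
    {π : Perm ι // ∀ i, i ∈ U ↔ π i ∈ V} ≃ (U ≃ V) × ({i // i ∉ U} ≃ {i // i ∉ V}) where
  toFun π := (π.1.subtypeEquiv π.2, π.1.subtypeEquiv fun i => not_congr (π.2 i))
  invFun p := ⟨Equiv.subtypeCongr p.1 p.2, fun i => by
    by_cases h : i ∈ U <;> simp [Equiv.subtypeCongr, h, (p.2 _).2]⟩
  left_inv π := by
    ext i
    by_cases h : i ∈ U <;> simp [Equiv.subtypeCongr, h]
  right_inv p := by
    ext i <;> simp [Equiv.subtypeCongr, i.2]

variable [Fintype ι]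

def permsOnto (U V : Finset ι) : Finset (Perm ι) := {π | ∀ i, i ∈ U ↔ π i ∈ V}

theorem mem_permsOnto {U V : Finset ι} {π : Perm ι} :
    π ∈ permsOnto U V ↔ ∀ i, i ∈ U ↔ π i ∈ V := by
  simp [permsOnto]

theorem permsOnto_compl (U V : Finset ι) : permsOnto Uᶜ Vᶜ = permsOnto U V := by
  ext π
  simp [mem_permsOnto, not_iff_not]

theorem mem_permsOnto_of_mapsTo {U V : Finset ι} {π : Perm ι} (hUV : #V ≤ #U)
    (h : ∀ i ∈ U, π i ∈ V) : π ∈ permsOnto U V := by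
  have hmap : U.map π.toEmbedding = V :=
    eq_of_subset_of_card_le (fun _ hv => by
      obtain ⟨i, hi, rfl⟩ := mem_map.1 hv
      exact h i hi) (by rwa [card_map])
  refine mem_permsOnto.2 fun i => ⟨h i, fun hi => ?_⟩
  rw [← hmap, mem_map_equiv] at hi
  simpa using hi

theorem mem_permsOnto_compl_singleton {s t : ι} {π : Perm ι} :
    π ∈ permsOnto {s}ᶜ {t}ᶜ ↔ π s = t := by
  rw [permsOnto_compl, mem_permsOnto]
  refine ⟨fun h => by simpa using h s, fun h i => ?_⟩
  rw [mem_singleton, mem_singleton, ← h, π.injective.eq_iff]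

theorem sum_permsOnto_prod_eq (A : Matrix ι ι ℝ) {U V : Finset ι} (hUV : #U = #V) :
    ∑ π ∈ permsOnto U V, ∏ i ∈ U, A i (π i) = (#Uᶜ).factorial * subPer A U V := by
  have hcompl : Fintype.card {i // i ∉ U} = Fintype.card {i // i ∉ V} := by
    simp [Fintype.card_subtype_compl, hUV]
  have hprod (f : U ≃ V) (g : {i // i ∉ U} ≃ {i // i ∉ V}) :
      ∏ i ∈ U, A i (((permSplitEquiv U V).symm (f, g)).1 i) = ∏ i : U, A i (f i) := by
    rw [← prod_coe_sort]
    exact Fintype.prod_congr _ _ fun i => by simp [permSplitEquiv, Equiv.subtypeCongr, i.2]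
  rw [sum_subtype (p := fun π : Perm ι => ∀ i, i ∈ U ↔ π i ∈ V) _ fun _ => mem_permsOnto,
    ← (permSplitEquiv U V).symm.sum_comp, Fintype.sum_prod_type_right]
  simp only [hprod, sum_const, card_univ, Fintype.card_equiv (Fintype.equivOfCardEq hcompl),
    nsmul_eq_mul]
  simp [Fintype.card_subtype_compl, card_compl, subPer, perR]

end PermSums

section AlternatingWalk

open Equiv

variable {ι : Type*} (σ π : Perm ι) (S : Finset ι) (t : ι)

def walk (j : ℕ) : ι := ((σ⁻¹ * π) ^ j) (σ⁻¹ t)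

theorem walk_zero : walk σ π t 0 = σ⁻¹ t := rfl

theorem apply_walk_zero : σ (walk σ π t 0) = t := by
  simp [walk]

theorem walk_add (a b : ℕ) : walk σ π t (a + b) = ((σ⁻¹ * π) ^ a) (walk σ π t b) := by
  simp only [walk, pow_add, Perm.mul_apply]

theorem walk_succ (j : ℕ) : walk σ π t (j + 1) = σ⁻¹ (π (walk σ π t j)) := by
  simp only [walk, pow_succ', Perm.mul_apply]

theorem apply_walk_succ (j : ℕ) : σ (walk σ π t (j + 1)) = π (walk σ π t j) := by
  simp [walk_succ]

variable {σ π t} in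
theorem walk_eq_inv_apply_of_walk_succ_eq_walk_zero {d : ℕ}
    (hd : walk σ π t (d + 1) = walk σ π t 0) :
    walk σ π t d = π⁻¹ t := by
  rw [walk_succ, walk_zero] at hd
  exact Perm.eq_inv_iff_eq.2 (σ⁻¹.injective hd)

noncomputable def hitTime : ℕ := sInf {j | walk σ π t j ∈ S}

noncomputable def walkEnd : ι := walk σ π t (hitTime σ π S t)

variable {S}

theorem hitTime_le {j : ℕ} (hj : walk σ π t j ∈ S) : hitTime σ π S t ≤ j :=
  Nat.sInf_le hj

theorem walk_hitTime_mem_of_mem {j : ℕ} (hj : walk σ π t j ∈ S) :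
    walk σ π t (hitTime σ π S t) ∈ S :=
  Nat.sInf_mem (s := {j | walk σ π t j ∈ S}) ⟨j, hj⟩

theorem walk_notMem_of_lt_hitTime {j : ℕ} (hj : j < hitTime σ π S t) : walk σ π t j ∉ S :=
  Nat.notMem_of_lt_sInf hj

theorem walk_injOn (hS : π⁻¹ t ∈ S) {a b : ℕ} (ha : a ≤ hitTime σ π S t)
    (hb : b ≤ hitTime σ π S t) (hab : walk σ π t a = walk σ π t b) : a = b := by
  wlog hlt : a < b generalizing a b
  · rcases (not_lt.1 hlt).eq_or_lt with h | h
    · exact h.symm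
    · exact (this hb ha hab.symm h).symm
  obtain ⟨d, rfl⟩ := Nat.exists_eq_add_of_lt hlt
  -- a closed walk through `walk 0` passes through `π⁻¹ t ∈ S` one step earlier
  have hd : walk σ π t (d + 1) = walk σ π t 0 := by
    refine ((σ⁻¹ * π) ^ a).injective ?_
    rw [← walk_add, ← walk_add, add_zero, ← add_assoc]
    exact hab.symm
  have := walk_eq_inv_apply_of_walk_succ_eq_walk_zero hd ▸ hS
  exact absurd this (walk_notMem_of_lt_hitTime σ π t (by omega))

theorem nodup_map_walk (hS : π⁻¹ t ∈ S) :
    ((List.range (hitTime σ π S t + 1)).map fun j => σ (walk σ π t j)).Nodup :=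
  List.nodup_range.map_on fun a ha b hb hab => by
    rw [List.mem_range] at ha hb
    exact walk_injOn σ π t hS (by omega) (by omega) (σ.injective hab)

theorem walk_ne_walkEnd (hS : π⁻¹ t ∈ S) {j : ℕ} (hj : j < hitTime σ π S t) :
    walk σ π t j ≠ walkEnd σ π S t :=
  fun h => hj.ne (walk_injOn σ π t hS hj.le le_rfl h)

theorem exists_walk_mem [Fintype ι] (hS : π⁻¹ t ∈ S) : ∃ j, walk σ π t j ∈ S := by
  have hd : walk σ π t (orderOf (σ⁻¹ * π) - 1 + 1) = walk σ π t 0 := by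
    rw [Nat.sub_add_cancel (orderOf_pos _), walk, walk, pow_orderOf_eq_one, pow_zero]
  exact ⟨_, walk_eq_inv_apply_of_walk_succ_eq_walk_zero hd ▸ hS⟩

theorem walkEnd_mem [Fintype ι] (hS : π⁻¹ t ∈ S) : walkEnd σ π S t ∈ S :=
  (exists_walk_mem σ π t hS).elim fun _ => walk_hitTime_mem_of_mem σ π t

end AlternatingWalk

section Exchange

open Equiv

variable {ι : Type*} [DecidableEq ι] (σ π : Perm ι) (S : Finset ι) (t : ι)

/-- The cycle `t ↦ π (walk 0) ↦ ⋯ ↦ π (walk (m - 1)) ↦ t`, `m` the hitting time. -/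
noncomputable def walkCycle : Perm ι :=
  ((List.range (hitTime σ π S t + 1)).map fun j => σ (walk σ π t j)).formPerm

noncomputable def walkSet : Finset ι := (range (hitTime σ π S t + 1)).image (walk σ π t)

/-- `σ` with the columns of `π` along the walk, except that `walkEnd σ π S t` goes to `t`. -/
noncomputable def exchangeLeft : Perm ι := walkCycle σ π S t * σ

/-- `π` with the columns of `σ` along the walk; the row `π⁻¹ t` receives the freed column
`π (walkEnd σ π S t)`. -/
noncomputable def exchangeRight : Perm ι :=
  (walkCycle σ π S t)⁻¹ * π * swap (walkEnd σ π S t) (π⁻¹ t)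

variable {S}

theorem walkCycle_apply_walk (hS : π⁻¹ t ∈ S) {j : ℕ} (hj : j ≤ hitTime σ π S t) :
    walkCycle σ π S t (σ (walk σ π t j)) =
      σ (walk σ π t ((j + 1) % (hitTime σ π S t + 1))) := by
  have h := List.formPerm_apply_getElem _ (nodup_map_walk σ π t hS) j (by simp; omega)
  simpa [walkCycle] using h

theorem walkCycle_apply_of_lt (hS : π⁻¹ t ∈ S) {j : ℕ} (hj : j < hitTime σ π S t) :
    walkCycle σ π S t (σ (walk σ π t j)) = π (walk σ π t j) := by
  rw [walkCycle_apply_walk σ π t hS hj.le, Nat.mod_eq_of_lt (by omega), apply_walk_succ]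

theorem walkCycle_walkEnd (hS : π⁻¹ t ∈ S) :
    walkCycle σ π S t (σ (walkEnd σ π S t)) = t := by
  rw [walkEnd, walkCycle_apply_walk σ π t hS le_rfl, Nat.mod_self, apply_walk_zero]

theorem walkCycle_apply_of_forall_ne {z : ι} (hzt : z ≠ t)
    (hz : ∀ j < hitTime σ π S t, z ≠ π (walk σ π t j)) : walkCycle σ π S t z = z := by
  refine List.formPerm_apply_of_notMem ?_
  simp only [List.mem_map, List.mem_range, not_exists, not_and]
  rintro (_ | j) hj rfl
  · exact hzt (apply_walk_zero σ π t)
  · exact hz j (by omega) (apply_walk_succ σ π t j)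

theorem mem_walkSet {i : ι} : i ∈ walkSet σ π S t ↔ ∃ j ≤ hitTime σ π S t, walk σ π t j = i := by
  simp [walkSet]

theorem walk_mem_walkSet {j : ℕ} (hj : j ≤ hitTime σ π S t) : walk σ π t j ∈ walkSet σ π S t :=
  (mem_walkSet σ π t).2 ⟨j, hj, rfl⟩

theorem eq_walkEnd_of_mem_walkSet {i : ι} (hi : i ∈ walkSet σ π S t) (hiS : i ∈ S) :
    i = walkEnd σ π S t := by
  obtain ⟨j, hj, rfl⟩ := (mem_walkSet σ π t).1 hi
  obtain rfl | hj := hj.eq_or_lt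
  · rfl
  · exact absurd hiS (walk_notMem_of_lt_hitTime σ π t hj)

theorem exchangeLeft_apply_of_notMem {i : ι} (hi : i ∉ walkSet σ π S t) :
    exchangeLeft σ π S t i = σ i := by
  refine walkCycle_apply_of_forall_ne σ π t (fun h => hi ?_) fun j hj h => hi ?_
  · have h0 : walk σ π t 0 = i := Perm.inv_eq_iff_eq.2 h.symm
    exact h0 ▸ walk_mem_walkSet σ π t (Nat.zero_le _)
  · rw [← apply_walk_succ, σ.injective.eq_iff] at h
    exact h ▸ walk_mem_walkSet σ π t (by omega)

theorem exchangeLeft_apply_of_mem (hS : π⁻¹ t ∈ S) {i : ι} (hi : i ∈ walkSet σ π S t)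
    (hne : i ≠ walkEnd σ π S t) : exchangeLeft σ π S t i = π i := by
  obtain ⟨j, hj, rfl⟩ := (mem_walkSet σ π t).1 hi
  exact walkCycle_apply_of_lt σ π t hS (hj.lt_of_ne fun h => hne (h ▸ rfl))

theorem exchangeLeft_walkEnd (hS : π⁻¹ t ∈ S) : exchangeLeft σ π S t (walkEnd σ π S t) = t :=
  walkCycle_walkEnd σ π t hS

theorem exchangeRight_apply (i : ι) : exchangeRight σ π S t i =
    (walkCycle σ π S t)⁻¹ (π (swap (walkEnd σ π S t) (π⁻¹ t) i)) := rfl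

theorem exchangeRight_apply_of_mem (hS : π⁻¹ t ∈ S) {i : ι} (hi : i ∈ walkSet σ π S t) :
    exchangeRight σ π S t i = σ i := by
  obtain ⟨j, hj, rfl⟩ := (mem_walkSet σ π t).1 hi
  rw [exchangeRight_apply, Perm.inv_eq_iff_eq]
  obtain rfl | hj := hj.eq_or_lt
  · rw [← walkEnd, swap_apply_left, Perm.coe_inv, apply_symm_apply]
    exact (walkCycle_walkEnd σ π t hS).symm
  · have hne : walk σ π t j ≠ π⁻¹ t := fun h => walk_notMem_of_lt_hitTime σ π t hj (h ▸ hS)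
    rw [swap_apply_of_ne_of_ne (walk_ne_walkEnd σ π t hS hj) hne,
      walkCycle_apply_of_lt σ π t hS hj]

theorem walkCycle_apply_self_of_notMem {i : ι} (hi : i ∉ walkSet σ π S t) (hit : i ≠ π⁻¹ t) :
    walkCycle σ π S t (π i) = π i := by
  refine walkCycle_apply_of_forall_ne σ π t (fun h => hit (Perm.eq_inv_iff_eq.2 h)) ?_
  intro j hj h
  exact hi (π.injective h ▸ walk_mem_walkSet σ π t hj.le)

theorem exchangeRight_apply_of_notMem (hS : π⁻¹ t ∈ S) {i : ι} (hi : i ∉ walkSet σ π S t)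
    (hiS : i ∉ S) : exchangeRight σ π S t i = π i := by
  have hit : i ≠ π⁻¹ t := fun h => hiS (h ▸ hS)
  have hie : i ≠ walkEnd σ π S t := fun h => hi (h ▸ walk_mem_walkSet σ π t le_rfl)
  rw [exchangeRight_apply, swap_apply_of_ne_of_ne hie hit, Perm.inv_eq_iff_eq,
    walkCycle_apply_self_of_notMem σ π t hi hit]

theorem exchangeRight_mem_erase [Fintype ι] (hS : π⁻¹ t ∈ S) {T : Finset ι} (hπ : ∀ i ∈ S, π i ∈ T)
    {i : ι} (hi : i ∈ S.erase (walkEnd σ π S t)) :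
    exchangeRight σ π S t i ∈ T.erase t := by
  obtain ⟨hie, hiS⟩ := mem_erase.1 hi
  have hiW : i ∉ walkSet σ π S t := fun h => hie (eq_walkEnd_of_mem_walkSet σ π t h hiS)
  by_cases hit : i = π⁻¹ t
  · subst hit
    have hne : π (walkEnd σ π S t) ≠ t := fun h => hie (Perm.eq_inv_iff_eq.2 h).symm
    have hfix : walkCycle σ π S t (π (walkEnd σ π S t)) = π (walkEnd σ π S t) :=
      walkCycle_apply_of_forall_ne σ π t hne fun j hj h =>
        walk_ne_walkEnd σ π t hS hj (π.injective h).symm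
    rw [exchangeRight_apply, swap_apply_right, Perm.inv_eq_iff_eq.2 hfix.symm]
    exact mem_erase.2 ⟨hne, hπ _ (walkEnd_mem σ π t hS)⟩
  · rw [exchangeRight_apply, swap_apply_of_ne_of_ne hie hit, Perm.inv_eq_iff_eq.2
      (walkCycle_apply_self_of_notMem σ π t hiW hit).symm]
    exact mem_erase.2 ⟨fun h => hit (Perm.eq_inv_iff_eq.2 h), hπ i hiS⟩

variable {σ π t}

theorem walk_exchange (hS : π⁻¹ t ∈ S) {j : ℕ} (hj : j ≤ hitTime σ π S t) :
    walk (exchangeRight σ π S t) (exchangeLeft σ π S t) t j = walk σ π t j := by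
  induction j with
  | zero =>
    rw [walk_zero, Perm.inv_eq_iff_eq, exchangeRight_apply_of_mem σ π t hS
      (walk_mem_walkSet σ π t hj), apply_walk_zero]
  | succ j ih =>
    have hj' : j < hitTime σ π S t := by omega
    rw [walk_succ, ih hj'.le, exchangeLeft_apply_of_mem σ π t hS (walk_mem_walkSet σ π t hj'.le)
      (walk_ne_walkEnd σ π t hS hj'), Perm.inv_eq_iff_eq,
      exchangeRight_apply_of_mem σ π t hS (walk_mem_walkSet σ π t hj), apply_walk_succ]

theorem hitTime_exchange [Fintype ι] (hS : π⁻¹ t ∈ S) :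
    hitTime (exchangeRight σ π S t) (exchangeLeft σ π S t) S t = hitTime σ π S t := by
  have hmem : walk (exchangeRight σ π S t) (exchangeLeft σ π S t) t (hitTime σ π S t) ∈ S := by
    rw [walk_exchange hS le_rfl]
    exact walkEnd_mem σ π t hS
  have hle : hitTime (exchangeRight σ π S t) (exchangeLeft σ π S t) S t ≤ hitTime σ π S t :=
    hitTime_le _ _ t hmem
  refine hle.antisymm (not_lt.1 fun hlt => ?_)
  have hmem' : walk (exchangeRight σ π S t) (exchangeLeft σ π S t) t
      (hitTime (exchangeRight σ π S t) (exchangeLeft σ π S t) S t) ∈ S :=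
    walk_hitTime_mem_of_mem _ _ t hmem
  rw [walk_exchange hS hlt.le] at hmem'
  exact walk_notMem_of_lt_hitTime σ π t hlt hmem'

theorem walkCycle_exchange [Fintype ι] (hS : π⁻¹ t ∈ S) :
    walkCycle (exchangeRight σ π S t) (exchangeLeft σ π S t) S t = walkCycle σ π S t := by
  rw [walkCycle, walkCycle, hitTime_exchange hS]
  congr 1
  refine List.map_congr_left fun j hj => ?_
  have hj : j ≤ hitTime σ π S t := Nat.lt_succ_iff.1 (List.mem_range.1 hj)
  rw [walk_exchange hS hj, exchangeRight_apply_of_mem σ π t hS (walk_mem_walkSet σ π t hj)]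

theorem inv_walkCycle_exchange_mul [Fintype ι] (hS : π⁻¹ t ∈ S) :
    (walkCycle (exchangeRight σ π S t) (exchangeLeft σ π S t) S t)⁻¹ * exchangeLeft σ π S t =
      σ := by
  rw [walkCycle_exchange hS, exchangeLeft, _root_.inv_mul_cancel_left]

theorem walkCycle_exchange_mul_swap [Fintype ι] (hS : π⁻¹ t ∈ S) :
    walkCycle (exchangeRight σ π S t) (exchangeLeft σ π S t) S t * exchangeRight σ π S t *
      swap (walkEnd σ π S t) (π⁻¹ t) = π := by
  rw [walkCycle_exchange hS, exchangeRight, mul_assoc, mul_assoc, mul_assoc, Equiv.swap_mul_self,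
    mul_one, _root_.mul_inv_cancel_left]

variable (σ π t)

theorem prod_mul_prod_eq_exchange [Fintype ι] (hS : π⁻¹ t ∈ S) (A : Matrix ι ι ℝ) :
    (∏ i, A i (σ i)) * ∏ i ∈ Sᶜ, A i (π i) =
      (∏ i ∈ {walkEnd σ π S t}ᶜ, A i (exchangeLeft σ π S t i)) *
        ∏ i ∈ (S.erase (walkEnd σ π S t))ᶜ, A i (exchangeRight σ π S t i) := by
  rw [← Fintype.prod_ite_mem Sᶜ, ← Fintype.prod_ite_mem {walkEnd σ π S t}ᶜ,
    ← Fintype.prod_ite_mem (S.erase (walkEnd σ π S t))ᶜ, ← prod_mul_distrib, ← prod_mul_distrib]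
  refine Fintype.prod_congr _ _ fun i => ?_
  by_cases hW : i ∈ walkSet σ π S t
  · by_cases he : i = walkEnd σ π S t
    · subst he
      simp [walkEnd_mem σ π t hS, exchangeRight_apply_of_mem σ π t hS hW]
    · have hiS : i ∉ S := fun h => he (eq_walkEnd_of_mem_walkSet σ π t hW h)
      simp [hiS, he, exchangeLeft_apply_of_mem σ π t hS hW he,
        exchangeRight_apply_of_mem σ π t hS hW, mul_comm]
  · have he : i ≠ walkEnd σ π S t := fun h => hW (h ▸ walk_mem_walkSet σ π t le_rfl)
    by_cases hiS : i ∈ S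
    · simp [hiS, he, exchangeLeft_apply_of_notMem σ π t hW]
    · simp [hiS, he, exchangeLeft_apply_of_notMem σ π t hW,
        exchangeRight_apply_of_notMem σ π t hS hW hiS]

end Exchange

section Injection

open Equiv

variable {ι : Type*} [DecidableEq ι] [Fintype ι]

theorem factorial_mul_per_mul_subPer_compl (A : Matrix ι ι ℝ) {S T : Finset ι} (hST : #S = #T) :
    (#S).factorial * (per A * subPer A Sᶜ Tᶜ) =
      ∑ p ∈ (univ : Finset (Perm ι)) ×ˢ permsOnto Sᶜ Tᶜ,
        (∏ i, A i (p.1 i)) * ∏ i ∈ Sᶜ, A i (p.2 i) := by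
  simp only [sum_product, ← sum_mul_sum]
  rw [sum_permsOnto_prod_eq A (by simp [card_compl, hST]), compl_compl, per]
  ring

theorem factorial_mul_sum_subPer_mul_subPer (A : Matrix ι ι ℝ) {S T : Finset ι} (hST : #S = #T)
    {t : ι} (ht : t ∈ T) :
    (#S).factorial * ∑ s ∈ S, subPer A {s}ᶜ {t}ᶜ * subPer A (S.erase s)ᶜ (T.erase t)ᶜ =
      ∑ q ∈ S ×ˢ S.sigma fun s => permsOnto {s}ᶜ {t}ᶜ ×ˢ permsOnto (S.erase s)ᶜ (T.erase t)ᶜ,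
        (∏ i ∈ {q.2.1}ᶜ, A i (q.2.2.1 i)) * ∏ i ∈ (S.erase q.2.1)ᶜ, A i (q.2.2.2 i) := by
  have hS : #S ≠ 0 := hST ▸ (card_pos.2 ⟨t, ht⟩).ne'
  have key (s : ι) (hs : s ∈ S) :
      (∑ μ ∈ permsOnto {s}ᶜ {t}ᶜ, ∏ i ∈ {s}ᶜ, A i (μ i)) *
        (∑ ν ∈ permsOnto (S.erase s)ᶜ (T.erase t)ᶜ, ∏ i ∈ (S.erase s)ᶜ, A i (ν i)) =
      (#S - 1).factorial * (subPer A {s}ᶜ {t}ᶜ * subPer A (S.erase s)ᶜ (T.erase t)ᶜ) := by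
    rw [sum_permsOnto_prod_eq A (by simp [card_compl]), sum_permsOnto_prod_eq A
        (by rw [card_compl, card_compl, card_erase_of_mem hs, card_erase_of_mem ht, hST]),
      compl_compl, compl_compl, card_singleton, card_erase_of_mem hs]
    simp only [Nat.factorial_one, Nat.cast_one, one_mul]
    ring
  simp only [sum_product, sum_sigma, ← sum_mul_sum]
  rw [sum_const, nsmul_eq_mul, sum_congr rfl key, ← mul_sum, ← mul_assoc, ← Nat.cast_mul,
    Nat.mul_factorial_pred hS]

theorem per_mul_subPer_compl_le {A : Matrix ι ι ℝ} (hA : ∀ i j, 0 ≤ A i j) {S T : Finset ι}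
    (hST : #S = #T) {t : ι} (ht : t ∈ T) :
    per A * subPer A Sᶜ Tᶜ ≤ ∑ s ∈ S, subPer A {s}ᶜ {t}ᶜ * subPer A (S.erase s)ᶜ (T.erase t)ᶜ := by
  refine le_of_mul_le_mul_left ?_ (Nat.cast_pos.2 (#S).factorial_pos)
  rw [factorial_mul_per_mul_subPer_compl A hST, factorial_mul_sum_subPer_mul_subPer A hST ht]
  have onto {π : Perm ι} (hπ : π ∈ permsOnto Sᶜ Tᶜ) (i : ι) : i ∈ S ↔ π i ∈ T := by
    rw [permsOnto_compl] at hπ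
    exact mem_permsOnto.1 hπ i
  have hinv {π : Perm ι} (hπ : π ∈ permsOnto Sᶜ Tᶜ) : π⁻¹ t ∈ S := by
    rw [onto hπ]
    simpa using ht
  refine sum_le_sum_of_injOn
    (fun p => (p.2⁻¹ t, ⟨walkEnd p.1 p.2 S t, exchangeLeft p.1 p.2 S t, exchangeRight p.1 p.2 S t⟩))
    (Set.LeftInvOn.injOn (f₁' := fun q =>
      ((walkCycle q.2.2.2 q.2.2.1 S t)⁻¹ * q.2.2.1, walkCycle q.2.2.2 q.2.2.1 S t * q.2.2.2 *
        swap q.2.1 q.1)) fun p hp => ?_) (fun p hp => ?_) (fun p hp => ?_) (fun q _ => ?_)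
  · have hS := hinv (mem_product.1 hp).2
    exact Prod.ext (inv_walkCycle_exchange_mul hS) (walkCycle_exchange_mul_swap hS)
  · obtain ⟨σ, π⟩ := p
    have hπ := (mem_product.1 hp).2
    have hS := hinv hπ
    have hcard : #(T.erase t) ≤ #(S.erase (walkEnd σ π S t)) := by
      rw [card_erase_of_mem ht, card_erase_of_mem (walkEnd_mem σ π t hS), hST]
    refine mem_product.2 ⟨hS, mem_sigma.2 ⟨walkEnd_mem σ π t hS, mem_product.2 ⟨?_, ?_⟩⟩⟩
    · exact mem_permsOnto_compl_singleton.2 (exchangeLeft_walkEnd σ π t hS)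
    · rw [permsOnto_compl]
      exact mem_permsOnto_of_mapsTo hcard fun i hi =>
        exchangeRight_mem_erase σ π t hS (fun i => (onto hπ i).1) hi
  · exact prod_mul_prod_eq_exchange p.1 p.2 t (hinv (mem_product.1 hp).2) A
  · exact mul_nonneg (prod_nonneg fun i _ => hA _ _) (prod_nonneg fun i _ => hA _ _)

end Injection

section Main

variable {ι : Type*} [DecidableEq ι] [Fintype ι]

theorem per_pow_mul_subPer_compl_le {A : Matrix ι ι ℝ} (hA : ∀ i j, 0 ≤ A i j)
    {S T : Finset ι} (hST : #S = #T) :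
    per A ^ #S * subPer A Sᶜ Tᶜ ≤ per A * subPer (perAdj A) T S := by
  induction hT : #T generalizing S T with
  | zero =>
    obtain rfl := card_eq_zero.1 hT
    obtain rfl := card_eq_zero.1 (hST.trans hT)
    simp [subPer_univ, subPer_empty]
  | succ k ih =>
    obtain ⟨t, ht⟩ := card_pos.1 (show 0 < #T by omega)
    have hper : 0 ≤ per A := per_nonneg hA
    calc per A ^ #S * subPer A Sᶜ Tᶜ = per A ^ k * (per A * subPer A Sᶜ Tᶜ) := by
          rw [hST, hT, pow_succ]; ring
      _ ≤ per A ^ k * ∑ s ∈ S, subPer A {s}ᶜ {t}ᶜ * subPer A (S.erase s)ᶜ (T.erase t)ᶜ := by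
          gcongr
          exact per_mul_subPer_compl_le hA hST ht
      _ = ∑ s ∈ S, subPer A {s}ᶜ {t}ᶜ *
            (per A ^ #(S.erase s) * subPer A (S.erase s)ᶜ (T.erase t)ᶜ) := by
          rw [mul_sum]
          refine sum_congr rfl fun s hs => ?_
          rw [card_erase_of_mem hs, hST, hT, Nat.add_sub_cancel]
          ring
      _ ≤ ∑ s ∈ S, subPer A {s}ᶜ {t}ᶜ * (per A * subPer (perAdj A) (T.erase t) (S.erase s)) := by
          refine sum_le_sum fun s hs => mul_le_mul_of_nonneg_left ?_ (subPer_nonneg hA _ _)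
          exact ih (by rw [card_erase_of_mem hs, card_erase_of_mem ht, hST])
            (by rw [card_erase_of_mem ht, hT, Nat.add_sub_cancel])
      _ = per A * subPer (perAdj A) T S := by
          rw [subPer_eq_sum_mul_subPer_erase (perAdj A) ht, mul_sum]
          refine sum_congr rfl fun s _ => ?_
          simp only [perAdj, Matrix.of_apply]
          ring

end Main

theorem per_submatrix_succAbove {d : ℕ} (B : Matrix (Fin (d + 1)) (Fin (d + 1)) ℝ)
    (j i : Fin (d + 1)) :
    per (B.submatrix j.succAbove i.succAbove) = subPer B {j}ᶜ {i}ᶜ := by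
  let e (k : Fin (d + 1)) : Fin d ≃ ↥({k}ᶜ : Finset (Fin (d + 1))) :=
    (finSuccAboveEquiv k).trans (Equiv.subtypeEquivRight fun _ => by simp)
  rw [subPer, ← perR_submatrix_equiv _ (e j) (e i)]
  rfl

theorem pinv_eq_smul_perAdj {d : ℕ} (B : Matrix (Fin (d + 1)) (Fin (d + 1)) ℝ) :
    pinv B = (per B)⁻¹ • perAdj B := by
  ext i j
  simp [pinv, perAdj, per_submatrix_succAbove, div_eq_inv_mul]

theorem stmt4 {n : ℕ} (B : Matrix (Fin (n + 1)) (Fin (n + 1)) ℝ)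
    (hB : ∀ i j, 0 ≤ B i j) (hper : 0 < per B)
    (S T : Finset (Fin (n + 1))) (hST : S.card = T.card) :
    perR (B.submatrix (fun a : ↥(Sᶜ : Finset (Fin (n + 1))) => (a : Fin (n + 1)))
        (fun b : ↥(Tᶜ : Finset (Fin (n + 1))) => (b : Fin (n + 1)))) / per B ≤
      perR ((pinv B).submatrix (fun a : ↥T => (a : Fin (n + 1)))
        (fun b : ↥S => (b : Fin (n + 1)))) := by
  change subPer B Sᶜ Tᶜ / per B ≤ subPer (pinv B) T S
  rw [pinv_eq_smul_perAdj, subPer_smul, ← hST, div_le_iff₀ hper]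
  calc subPer B Sᶜ Tᶜ ≤ (per B ^ #S)⁻¹ * (per B * subPer (perAdj B) T S) :=
        (le_inv_mul_iff₀ (pow_pos hper _)).2 (per_pow_mul_subPer_compl_le hB hST)
    _ = (per B)⁻¹ ^ #S * subPer (perAdj B) T S * per B := by
        rw [inv_pow]
        ring
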